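/- With f, σ, b > 0, ϑ ∈ ℝ, r = (ϑ² + b²f²/σ²)^{1/2}, fix t > 0. As ε → 0, the solution γ_ε(t) of the Riccati equation γ' = 2ϑγ − (f²/σ²)γ² + b² with γ(0) = d²/ε² converges to γ*(t) = (σ²/f²)[ϑ + r + 2r/(e^{2rt} − 1)]; more precisely |γ_ε(t) − γ*(t)| ≤ C·ε² uniformly on [τ, T] for any 0 < τ ≤ T, for some constant C depending on τ, T and the coefficients. -/

import Mathlib

/-!
Write `E = e^{-2rt}`, `B(t) = f²(1 − E)/(2σ²r)`, `c = (σ²/f²)(ϑ + r)` and `K = d²/ε²`. Then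
`γ_ε(t) = E·((K − c)⁻¹ + B)⁻¹ + c` and `γ*(t) = c + E·B⁻¹`, so the gap is
`−E / ((1 + (K − c)B)·B)`. Since `ϑ ≤ r` gives `cB ≤ 1`, the denominator is at least `K·B²`,
and `B` is increasing in `t`, so on `[τ, T]` the gap is at most `ε² / (d²·B(τ)²)`.
-/

open Real

lemma abs_inv_inv_add_sub_inv_le {B c K : ℝ} (hB : 0 < B) (hcB : c * B ≤ 1) (hK : 0 < K) :
    |((K - c)⁻¹ + B)⁻¹ - B⁻¹| ≤ (K * B ^ 2)⁻¹ := by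
  rcases eq_or_ne (K - c) 0 with hKc | hKc
  · rw [hKc, inv_zero, zero_add, sub_self, abs_zero]
    positivity
  have hden : K * B ≤ 1 + (K - c) * B := by linarith
  have hden_pos : 0 < 1 + (K - c) * B := by nlinarith [mul_pos hK hB]
  have hgap : ((K - c)⁻¹ + B)⁻¹ - B⁻¹ = -((1 + (K - c) * B) * B)⁻¹ := by
    field_simp
    ring
  rw [hgap, abs_neg, abs_of_pos (by positivity), sq, ← mul_assoc]
  exact inv_anti₀ (by positivity) (mul_le_mul_of_nonneg_right hden hB.le)

lemma abs_mul_inv_inv_add_sub_le {E B B₀ c K : ℝ} (hE₀ : 0 ≤ E) (hE₁ : E ≤ 1) (hB₀ : 0 < B₀)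
    (hB₀B : B₀ ≤ B) (hcB : c * B ≤ 1) (hK : 0 < K) :
    |E * ((K - c)⁻¹ + B)⁻¹ + c - (c + E * B⁻¹)| ≤ (K * B₀ ^ 2)⁻¹ := by
  have hB : 0 < B := hB₀.trans_le hB₀B
  calc |E * ((K - c)⁻¹ + B)⁻¹ + c - (c + E * B⁻¹)| = E * |((K - c)⁻¹ + B)⁻¹ - B⁻¹| := by
        rw [← abs_of_nonneg hE₀, ← abs_mul, abs_of_nonneg hE₀]; ring_nf
    _ ≤ 1 * (K * B ^ 2)⁻¹ := by
        gcongr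
        exact abs_inv_inv_add_sub_inv_le hB hcB hK
    _ ≤ (K * B₀ ^ 2)⁻¹ := by
        rw [one_mul]
        gcongr

noncomputable def riccatiGain (f σ r t : ℝ) : ℝ :=
  f ^ 2 * (1 - exp (-(2 * r * t))) / (2 * σ ^ 2 * r)

section riccatiGain

variable {f σ r : ℝ}

lemma riccatiGain_pos (hf : 0 < f) (hσ : 0 < σ) (hr : 0 < r) {t : ℝ} (ht : 0 < t) :
    0 < riccatiGain f σ r t := by
  have : exp (-(2 * r * t)) < 1 := exp_lt_one_iff.2 (by nlinarith)
  unfold riccatiGain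
  have : 0 < 1 - exp (-(2 * r * t)) := by linarith
  positivity

lemma riccatiGain_mono (hr : 0 < r) : Monotone (riccatiGain f σ r) := by
  intro s t hst
  unfold riccatiGain
  gcongr

lemma mul_riccatiGain_le_one (hf : f ≠ 0) (hσ : σ ≠ 0) (hr : 0 < r) {ϑ : ℝ} (hϑ : ϑ ≤ r)
    {t : ℝ} (ht : 0 ≤ t) : σ ^ 2 / f ^ 2 * (ϑ + r) * riccatiGain f σ r t ≤ 1 := by
  have hE₀ : 0 < exp (-(2 * r * t)) := exp_pos _
  have hE₁ : exp (-(2 * r * t)) ≤ 1 := exp_le_one_iff.2 (by nlinarith)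
  have : σ ^ 2 / f ^ 2 * (ϑ + r) * riccatiGain f σ r t
      = (ϑ + r) * (1 - exp (-(2 * r * t))) / (2 * r) := by
    unfold riccatiGain
    field_simp
  rw [this, div_le_one (by positivity)]
  nlinarith

lemma stationary_add_exp_mul_inv_riccatiGain (hf : f ≠ 0) (hσ : σ ≠ 0) (hr : r ≠ 0) {ϑ t : ℝ}
    (ht : t ≠ 0) :
    σ ^ 2 / f ^ 2 * (ϑ + r + 2 * r / (exp (2 * r * t) - 1))
      = σ ^ 2 / f ^ 2 * (ϑ + r) + exp (-(2 * r * t)) * (riccatiGain f σ r t)⁻¹ := by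
  have hexp : exp (2 * r * t) - 1 ≠ 0 := by
    rw [sub_ne_zero, Ne, exp_eq_one_iff]; positivity
  unfold riccatiGain
  rw [exp_neg]
  field_simp

end riccatiGain

theorem stmt_7_general (ϑ b f σ d τ T : ℝ) (hf : 0 < f) (hσ : 0 < σ) (hb : 0 < b)
    (hd : 0 < d) (hτ : 0 < τ)
    (r : ℝ) (hr : r = Real.sqrt (ϑ ^ 2 + b ^ 2 * f ^ 2 / σ ^ 2))
    (γε : ℝ → ℝ → ℝ) (γstar : ℝ → ℝ)
    (hγε : ∀ ε t, γε ε t =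
      Real.exp (-(2 * r * t)) *
        ((d ^ 2 / ε ^ 2 - σ ^ 2 / f ^ 2 * (ϑ + r))⁻¹
          + f ^ 2 * (1 - Real.exp (-(2 * r * t))) / (2 * σ ^ 2 * r))⁻¹
      + σ ^ 2 / f ^ 2 * (ϑ + r))
    (hγstar : ∀ t, γstar t =
      σ ^ 2 / f ^ 2 * (ϑ + r + 2 * r / (Real.exp (2 * r * t) - 1))) :
    ∃ C > 0, ∀ ε ∈ Set.Ioc (0:ℝ) 1, ∀ t ∈ Set.Icc τ T,
      |γε ε t - γstar t| ≤ C * ε ^ 2 := by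
  have hr₀ : 0 < r := hr ▸ sqrt_pos.2 (by positivity)
  have hϑr : ϑ ≤ r := by
    have : 0 ≤ b ^ 2 * f ^ 2 / σ ^ 2 := by positivity
    exact hr ▸ le_sqrt_of_sq_le (by linarith)
  have hBτ := riccatiGain_pos hf hσ hr₀ hτ
  refine ⟨(d ^ 2 * riccatiGain f σ r τ ^ 2)⁻¹, by positivity, ?_⟩
  rintro ε ⟨hε, -⟩ t ⟨hτt, -⟩
  have ht : 0 < t := hτ.trans_le hτt
  rw [hγε, hγstar, stationary_add_exp_mul_inv_riccatiGain hf.ne' hσ.ne' hr₀.ne' ht.ne']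
  calc _ ≤ (d ^ 2 / ε ^ 2 * riccatiGain f σ r τ ^ 2)⁻¹ :=
        abs_mul_inv_inv_add_sub_le (exp_pos _).le (exp_le_one_iff.2 (by nlinarith)) hBτ
          (riccatiGain_mono hr₀ hτt) (mul_riccatiGain_le_one hf.ne' hσ.ne' hr₀ hϑr ht.le)
          (by positivity)
    _ = (d ^ 2 * riccatiGain f σ r τ ^ 2)⁻¹ * ε ^ 2 := by field_simp

/-- Uniform `O(ε²)` expansion of the Riccati solution with initial value `d²/ε²`:
`|γ_ε(t) − γ*(t)| ≤ C·ε²` uniformly on `[τ,T]`. -/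
theorem stmt_7 (ϑ b f σ d τ T : ℝ) (hf : 0 < f) (hσ : 0 < σ) (hb : 0 < b)
    (hd : 0 < d) (hτ : 0 < τ) (hτT : τ ≤ T)
    (r : ℝ) (hr : r = Real.sqrt (ϑ ^ 2 + b ^ 2 * f ^ 2 / σ ^ 2))
    (γε : ℝ → ℝ → ℝ) (γstar : ℝ → ℝ)
    (hγε : ∀ ε t, γε ε t =
      Real.exp (-(2 * r * t)) *
        ((d ^ 2 / ε ^ 2 - σ ^ 2 / f ^ 2 * (ϑ + r))⁻¹
          + f ^ 2 * (1 - Real.exp (-(2 * r * t))) / (2 * σ ^ 2 * r))⁻¹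
      + σ ^ 2 / f ^ 2 * (ϑ + r))
    (hγstar : ∀ t, γstar t =
      σ ^ 2 / f ^ 2 * (ϑ + r + 2 * r / (Real.exp (2 * r * t) - 1))) :
    ∃ C > 0, ∀ ε ∈ Set.Ioc (0:ℝ) 1, ∀ t ∈ Set.Icc τ T,
      |γε ε t - γstar t| ≤ C * ε ^ 2 :=
  stmt_7_general ϑ b f σ d τ T hf hσ hb hd hτ r hr γε γstar hγε hγstar
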